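/- arXiv:2107.00726 — 12 statements merged into one kernel-verified Lean document; each statement's English description precedes it below -/
import Mathlib

section
/- Let X be a nonempty set, Y ⊆ X nonempty, and let Ω̄(X,Y) = {f : X → X : f(Y) = Y} and S̄(X,Y) = {f : X → X : the restriction of f to Y is a bijection of Y}. Then the set of regular elements of the semigroup Ω̄(X,Y) (under composition) equals S̄(X,Y). -/
open Set Function

section

variable {α β : Type*} {f : α → β} {s : Set α} {t : Set β}

/-- `g` inverts `f` between `s` and `t`: `f ∘ g = id` on `t = f '' s`, hence `g ∘ f = id` on
`s = g '' t`. -/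
theorem Set.bijOn_of_image_eq_of_comp_comp_eq {g : β → α} (hf : f '' s = t) (hg : g '' t = s)
    (h : f ∘ g ∘ f = f) : BijOn f s t := by
  subst hf
  have hfg : LeftInvOn f g (f '' s) := by
    rintro _ ⟨a, -, rfl⟩
    exact congrFun h a
  have hgf : LeftInvOn g f s := by
    intro x hx
    rw [← hg] at hx
    obtain ⟨y, hy, rfl⟩ := hx
    rw [hfg hy]
  exact InvOn.bijOn ⟨hgf, hfg⟩ (mapsTo_image f s) ((mapsTo_image g _).mono_right hg.subset)

theorem Set.BijOn.exists_image_eq_comp_comp_eq [Nonempty α] (hf : BijOn f s t) :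
    ∃ g : β → α, g '' t = s ∧ f ∘ g ∘ f = f := by
  classical
  refine ⟨t.piecewise (invFunOn f s) (invFun f), ?_, ?_⟩
  · rw [(t.piecewise_eqOn (invFunOn f s) (invFun f)).image_eq]
    exact (BijOn.symm hf.invOn_invFunOn.symm hf).image_eq
  · funext x
    by_cases hx : f x ∈ t
    · simp only [comp_apply, piecewise_eq_of_mem _ _ _ hx]
      exact invFunOn_eq (hf.surjOn hx)
    · simp only [comp_apply, piecewise_eq_of_notMem _ _ _ hx]
      exact invFun_eq ⟨x, rfl⟩

end

theorem stmt_1_general {X : Type*} [Nonempty X] (Y : Set X) :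
    {f : X → X | f '' Y = Y ∧ ∃ g : X → X, g '' Y = Y ∧ f ∘ g ∘ f = f}
      = {f : X → X | Set.BijOn f Y Y} := by
  ext f
  constructor
  · rintro ⟨hfY, g, hgY, hfgf⟩
    exact bijOn_of_image_eq_of_comp_comp_eq hfY hgY hfgf
  · intro hf
    exact ⟨hf.image_eq, hf.exists_image_eq_comp_comp_eq⟩

theorem stmt_1 {X : Type*} [Nonempty X] (Y : Set X) (hY : Y.Nonempty) :
    {f : X → X | f '' Y = Y ∧ ∃ g : X → X, g '' Y = Y ∧ f ∘ g ∘ f = f}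
      = {f : X → X | Set.BijOn f Y Y} :=
  stmt_1_general Y
end

section
/- Let X be a nonempty set, Y ⊆ X nonempty, and f ∈ S̄(X,Y) = {f : X → X : f restricted to Y is a bijection of Y}. Then f is unit-regular in S̄(X,Y) if and only if there exists a transversal T_f of ker(f) with Y ⊆ T_f and |X \ T_f| = |X \ f(X)|. -/
/-! If `f g f = f` then `g` carries `f(X)` onto a transversal `g(f(X))` of `ker f`, and a
bijection `g` carries the complement of `f(X)` onto the complement of that transversal.
Conversely, a transversal `T` is mapped bijectively onto `f(X)` by `f`; inverting this and
gluing it with a bijection `X \ f(X) ≃ X \ T` gives a permutation `g` with `g (f t) = t` on `T`,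
so `f g f = f`. If moreover `Y ⊆ T`, then `g` undoes `f` on `Y = f(Y)`, hence `g(Y) = Y`. -/

/-- A transversal of ker(f): a set containing exactly one element of each ker(f)-class. -/
def IsTransversal {X : Type*} (f : X → X) (T : Set X) : Prop :=
  ∀ x : X, ∃! t, t ∈ T ∧ f t = f x

open Set Function Cardinal Equiv

section

variable {X : Type*} {f g : X → X} {T : Set X}

theorem isTransversal_image_range_of_comp_comp (h : f ∘ g ∘ f = f) :
    IsTransversal f (g '' range f) := by
  intro x
  refine ⟨g (f x), ⟨mem_image_of_mem g (mem_range_self x), congrFun h x⟩, ?_⟩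
  rintro _ ⟨⟨_, ⟨y, rfl⟩, rfl⟩, hyx⟩
  exact congrArg g ((congrFun h y).symm.trans hyx)

theorem IsTransversal.bijOn_range (hT : IsTransversal f T) : BijOn f T (range f) := by
  refine ⟨fun t _ => mem_range_self t, fun s hs t ht hst => ?_, ?_⟩
  · exact (hT s).unique ⟨hs, rfl⟩ ⟨ht, hst.symm⟩
  · rintro _ ⟨x, rfl⟩
    obtain ⟨t, ⟨ht, hft⟩, -⟩ := hT x
    exact ⟨t, ht, hft⟩

theorem IsTransversal.exists_perm_apply_apply_eq (hT : IsTransversal f T)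
    (hcard : #↥Tᶜ = #↥(range f)ᶜ) : ∃ g : Perm X, ∀ t ∈ T, g (f t) = t := by
  classical
  obtain ⟨e⟩ := Cardinal.eq.mp hcard.symm
  let onRange : ↥(range f) ≃ ↥T := (hT.bijOn_range.equiv f).symm
  refine ⟨subtypeCongr onRange e, fun t ht => ?_⟩
  have hft : f t ∈ range f := mem_range_self t
  have : onRange ⟨f t, hft⟩ = ⟨t, ht⟩ := (hT.bijOn_range.equiv f).symm_apply_eq.mpr rfl
  simp [subtypeCongr, sumCompl_symm_apply_of_pos hft, this]

end

theorem stmt_4_general {X : Type*} (Y : Set X)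
    (f : X → X) (hf : Set.BijOn f Y Y) :
    (∃ g : X → X, Function.Bijective g ∧ g '' Y = Y ∧ f ∘ g ∘ f = f)
      ↔ ∃ T : Set X, IsTransversal f T ∧ Y ⊆ T ∧
          Cardinal.mk ↥(Tᶜ) = Cardinal.mk ↥((Set.range f)ᶜ) := by
  constructor
  · rintro ⟨g, hg, hgY, hfgf⟩
    refine ⟨g '' range f, isTransversal_image_range_of_comp_comp hfgf, ?_, ?_⟩
    · exact hgY ▸ image_mono hf.surjOn.subset_range
    · rw [← image_compl_eq hg]
      exact mk_image_eq hg.injective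
  · rintro ⟨T, hT, hYT, hcard⟩
    obtain ⟨g, hg⟩ := hT.exists_perm_apply_apply_eq hcard
    refine ⟨g, g.bijective, ?_, ?_⟩
    · calc g '' Y = g '' (f '' Y) := by rw [hf.image_eq]
        _ = Y := by
          rw [image_image]
          exact EqOn.image_eq_self fun y hy => hg y (hYT hy)
    · funext x
      obtain ⟨t, ⟨ht, hft⟩, -⟩ := hT x
      simp only [comp_apply, ← hft, hg t ht]

theorem stmt_4 {X : Type*} [Nonempty X] (Y : Set X) (hY : Y.Nonempty)
    (f : X → X) (hf : Set.BijOn f Y Y) :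
    (∃ g : X → X, Function.Bijective g ∧ g '' Y = Y ∧ f ∘ g ∘ f = f)
      ↔ ∃ T : Set X, IsTransversal f T ∧ Y ⊆ T ∧
          Cardinal.mk ↥(Tᶜ) = Cardinal.mk ↥((Set.range f)ᶜ) :=
  stmt_4_general Y f hf
end

section
/- Let X be a nonempty set and Y ⊆ X nonempty. The set of unit-regular elements of Ω̄(X,Y) = {f : X → X : f(Y) = Y} equals the set of unit-regular elements of S̄(X,Y) = {f : X → X : f|_Y is a bijection of Y}. -/
/-! If `f g f = f` then `g ∘ f` is idempotent; when it also maps `Y` onto `Y` it must fix `Y`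
pointwise, so `g` is a left inverse of `f` on `Y` and `f` is injective there. Together with
`f '' Y = Y` this makes `f|_Y` a bijection of `Y`; the converse inclusion is immediate. -/

namespace Set

variable {α β : Type*}

theorem eqOn_id_of_comp_self_of_image_eq {e : α → α} {s : Set α} (he : e ∘ e = e)
    (hs : e '' s = s) : EqOn e id s := by
  rw [← hs]
  rintro _ ⟨x, -, rfl⟩
  exact congrFun he x

theorem leftInvOn_of_comp_comp_eq {f : α → β} {g : β → α} {s : Set α} (hfgf : f ∘ g ∘ f = f)
    (hs : g '' (f '' s) = s) : LeftInvOn g f s := by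
  have hidem : (g ∘ f) ∘ (g ∘ f) = g ∘ f := by
    change g ∘ (f ∘ g ∘ f) = g ∘ f
    rw [hfgf]
  exact eqOn_id_of_comp_self_of_image_eq hidem (by rwa [← image_comp] at hs)

end Set

theorem stmt_5_general {X : Type*} (Y : Set X) :
    {f : X → X | f '' Y = Y ∧
        ∃ g : X → X, Function.Bijective g ∧ g '' Y = Y ∧ f ∘ g ∘ f = f}
      = {f : X → X | Set.BijOn f Y Y ∧
        ∃ g : X → X, Function.Bijective g ∧ g '' Y = Y ∧ f ∘ g ∘ f = f} := by
  ext f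
  constructor
  · rintro ⟨hfY, g, hg, hgY, hfgf⟩
    have hinj : Set.InjOn f Y :=
      (Set.leftInvOn_of_comp_comp_eq hfgf (by rw [hfY, hgY])).injOn
    refine ⟨?_, g, hg, hgY, hfgf⟩
    simpa only [hfY] using hinj.bijOn_image
  · rintro ⟨hbij, hreg⟩
    exact ⟨hbij.image_eq, hreg⟩

theorem stmt_5 {X : Type*} [Nonempty X] (Y : Set X) (hY : Y.Nonempty) :
    {f : X → X | f '' Y = Y ∧
        ∃ g : X → X, Function.Bijective g ∧ g '' Y = Y ∧ f ∘ g ∘ f = f}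
      = {f : X → X | Set.BijOn f Y Y ∧
        ∃ g : X → X, Function.Bijective g ∧ g '' Y = Y ∧ f ∘ g ∘ f = f} :=
  stmt_5_general Y
end

section
/- If X \ Y is infinite, then there exists f : X → X fixing every point of Y (hence f ∈ S̄(X,Y)) that is not unit-regular in S̄(X,Y). -/
/-! If `f` is injective and `f ∘ g ∘ f = f` with `g` injective, cancelling `f` and then `g`
gives `f ∘ g = id`, so `f` is surjective. Hence an injective, non-surjective map is not
unit-regular; one fixing `Y` pointwise is obtained by extending an injective, non-surjective
self-map of the infinite set `Yᶜ` by the identity on `Y`. -/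

open Function

theorem Infinite.exists_injective_not_surjective (α : Type*) [Infinite α] :
    ∃ j : α → α, Injective j ∧ ¬ Surjective j := by
  obtain ⟨e⟩ : Nonempty (Option α ≃ α) := by
    rw [← Cardinal.eq, Cardinal.mk_option, Cardinal.add_one_eq (Cardinal.infinite_iff.mp ‹_›)]
  refine ⟨e ∘ some, e.injective.comp (Option.some_injective α), fun hsurj => ?_⟩
  obtain ⟨a, ha⟩ := hsurj (e none)
  exact Option.some_ne_none a (e.injective ha)

theorem Set.exists_injective_not_surjective_of_infinite_compl {X : Type*} (s : Set X)
    (hs : sᶜ.Infinite) : ∃ f : X → X, (∀ x ∈ s, f x = x) ∧ Injective f ∧ ¬ Surjective f := by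
  classical
  have : Infinite ↥sᶜ := hs.to_subtype
  obtain ⟨j, hj_inj, hj_surj⟩ := Infinite.exists_injective_not_surjective ↥sᶜ
  let e := Equiv.Set.sumCompl s
  refine ⟨e ∘ Sum.map id j ∘ e.symm, fun x hx => ?_, ?_, ?_⟩
  · simp [e, Equiv.Set.sumCompl_symm_apply_of_mem hx]
  · exact e.injective.comp ((Sum.map_injective.mpr ⟨injective_id, hj_inj⟩).comp e.symm.injective)
  · rw [EquivLike.comp_surjective, EquivLike.surjective_comp, Sum.map_surjective]
    exact fun h => hj_surj h.2

theorem Function.Injective.surjective_of_comp_comp_eq_self {α : Type*} {f g : α → α}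
    (hf : Injective f) (hg : Injective g) (h : f ∘ g ∘ f = f) : Surjective f :=
  fun y => ⟨g y, hg (hf (congrFun h (g y)))⟩

theorem stmt_6_general {X : Type*} (Y : Set X)
    (hinf : (Yᶜ : Set X).Infinite) :
    ∃ f : X → X, (∀ y ∈ Y, f y = y) ∧
      ¬ ∃ g : X → X, Function.Bijective g ∧ g '' Y = Y ∧ f ∘ g ∘ f = f := by
  obtain ⟨f, hfix, hf_inj, hf_surj⟩ := Y.exists_injective_not_surjective_of_infinite_compl hinf
  refine ⟨f, hfix, ?_⟩
  rintro ⟨g, hg, -, hfgf⟩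
  exact hf_surj (hf_inj.surjective_of_comp_comp_eq_self hg.1 hfgf)

theorem stmt_6 {X : Type*} (Y : Set X) (hY : Y.Nonempty)
    (hinf : (Yᶜ : Set X).Infinite) :
    ∃ f : X → X, (∀ y ∈ Y, f y = y) ∧
      ¬ ∃ g : X → X, Function.Bijective g ∧ g '' Y = Y ∧ f ∘ g ∘ f = f :=
  stmt_6_general Y hinf
end

section
/- The semigroup Fix(X,Y) = {f : X → X : f(y) = y for all y ∈ Y} is regular: for every f ∈ Fix(X,Y) there exists g ∈ Fix(X,Y) with f g f = f. -/
/-!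
Every endomap `f` has an inner inverse `g` (send each point of the range of `f` to one of its
preimages). Redefining `g` to be the identity on `Y` keeps it an inner inverse, because on
`Y ∩ range f` the map `f` is itself the identity.
-/

namespace Function

theorem exists_comp_comp_eq_self {α : Type*} (f : α → α) : ∃ g : α → α, f ∘ g ∘ f = f := by
  classical
  refine ⟨fun z => if h : z ∈ Set.range f then Set.rangeSplitting f ⟨z, h⟩ else z, ?_⟩
  funext x
  simp only [comp_apply, Set.mem_range_self, dif_pos, Set.apply_rangeSplitting]

theorem comp_piecewise_id_comp_eq_self {α : Type*} {f g : α → α} {Y : Set α}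
    [∀ x, Decidable (x ∈ Y)] (hf : ∀ y ∈ Y, f y = y) (hg : f ∘ g ∘ f = f) :
    f ∘ Y.piecewise id g ∘ f = f := by
  funext x
  by_cases hx : f x ∈ Y
  · simp only [comp_apply, Set.piecewise_eq_of_mem Y id g hx, id, hf _ hx]
  · simpa only [comp_apply, Set.piecewise_eq_of_notMem Y id g hx] using congrFun hg x

end Function

theorem stmt_10_general {X : Type*} (Y : Set X) :
    ∀ f : X → X, (∀ y ∈ Y, f y = y) →
      ∃ g : X → X, (∀ y ∈ Y, g y = y) ∧ f ∘ g ∘ f = f := by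
  classical
  intro f hf
  obtain ⟨g, hg⟩ := Function.exists_comp_comp_eq_self f
  exact ⟨Y.piecewise id g, fun y hy => Set.piecewise_eq_of_mem Y id g hy,
    Function.comp_piecewise_id_comp_eq_self hf hg⟩

theorem stmt_10 {X : Type*} (Y : Set X) (hY : Y.Nonempty) :
    ∀ f : X → X, (∀ y ∈ Y, f y = y) →
      ∃ g : X → X, (∀ y ∈ Y, g y = y) ∧ f ∘ g ∘ f = f :=
  stmt_10_general Y
end

section
/- The monoid Fix(X,Y) = {f : X → X : f(y) = y for all y ∈ Y} is unit-regular if and only if X \ Y is finite. -/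
/-!
If `f ∘ g ∘ f = f` with `g` bijective and `f` surjective, then `f ∘ g = id`, so `f` is injective.
When `X \ Y` is infinite it is Dedekind-infinite, so it carries a surjective, non-injective
self-map; extended by the identity on `Y` this is an element of `Fix(X, Y)` that is not
unit-regular. When `X \ Y` is finite, pick for every point of `range f` outside `Y` a preimage,
necessarily outside `Y` as well; this partial injection of the finite set `X \ Y` extends to a
permutation `g` of `X \ Y`, and then `f ∘ g ∘ f = f`.
-/

open Function Equiv

theorem Function.Surjective.injective_of_comp_comp_eq {α : Type*} {f g : α → α}
    (hf : Surjective f) (hg : Surjective g) (hfgf : f ∘ g ∘ f = f) : Injective f := by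
  have hfg : LeftInverse f g := fun x => by
    obtain ⟨x, rfl⟩ := hf x
    exact congrFun hfgf x
  exact (hfg.rightInverse_of_surjective hg).injective

theorem Infinite.exists_surjective_not_injective (α : Type*) [Infinite α] :
    ∃ φ : α → α, Surjective φ ∧ ¬Injective φ := by
  obtain ⟨e⟩ : Nonempty (Option α ≃ α) := Cardinal.eq.1 <| by
    rw [Cardinal.mk_option, Cardinal.add_one_eq (Cardinal.infinite_iff.1 ‹_›)]
  obtain ⟨a⟩ := ‹Infinite α›.nonempty
  refine ⟨fun x => (e.symm x).getD a, fun x => ⟨e (some x), by simp⟩, fun h => ?_⟩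
  exact Option.some_ne_none a <| e.injective <| h (a₁ := e (some a)) (a₂ := e none) (by simp)

theorem Set.Infinite.exists_surjective_not_injective_fixing_compl {X : Type*} {Y : Set X}
    (hY : Yᶜ.Infinite) :
    ∃ f : X → X, (∀ y ∈ Y, f y = y) ∧ Surjective f ∧ ¬Injective f := by
  classical
  have := hY.to_subtype
  obtain ⟨φ, hφ, hφinj⟩ := Infinite.exists_surjective_not_injective (Yᶜ : Set X)
  let f : X → X := fun x => if h : x ∈ Yᶜ then φ ⟨x, h⟩ else x
  have hf_compl (x : (Yᶜ : Set X)) : f x = φ x := dif_pos x.2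
  refine ⟨f, fun y hy => dif_neg (not_not.2 hy), fun x => ?_,
    fun hinj => hφinj fun a b hab => Subtype.ext (hinj ?_)⟩
  · by_cases hx : x ∈ Yᶜ
    · obtain ⟨a, ha⟩ := hφ ⟨x, hx⟩
      exact ⟨a, by rw [hf_compl, ha]⟩
    · exact ⟨x, dif_neg hx⟩
  · rw [hf_compl, hf_compl, hab]

theorem Set.Finite.exists_perm_fixing_comp_comp_eq {X : Type*} {Y : Set X} (hY : Yᶜ.Finite)
    {f : X → X} (hf : ∀ y ∈ Y, f y = y) :
    ∃ σ : Perm X, (∀ y ∈ Y, σ y = y) ∧ f ∘ σ ∘ f = f := by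
  classical
  have := hY.to_subtype
  have hpre : ∀ z : {z : (Yᶜ : Set X) // (z : X) ∈ Set.range f},
      ∃ x : (Yᶜ : Set X), f x = z := by
    rintro ⟨z, x, hx⟩
    exact ⟨⟨x, fun hxY => z.2 (by rw [← hx, hf x hxY]; exact hxY)⟩, hx⟩
  choose sec hsec using hpre
  have hsec_inj : Injective sec := fun a b hab =>
    Subtype.ext <| Subtype.ext <| by rw [← hsec a, ← hsec b, hab]
  obtain ⟨τ, hτ⟩ := Perm.exists_extending_pair Subtype.val sec Subtype.val_injective hsec_inj
  refine ⟨Perm.ofSubtype τ, fun y hy => Perm.ofSubtype_apply_of_not_mem τ (not_not.2 hy),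
    funext fun x => ?_⟩
  by_cases hx : f x ∈ Y
  · simp only [comp_apply, Perm.ofSubtype_apply_of_not_mem τ (not_not.2 hx), hf _ hx]
  · simp only [comp_apply, Perm.ofSubtype_apply_of_mem τ hx]
    exact (congrArg (f ∘ Subtype.val) (hτ ⟨⟨f x, hx⟩, x, rfl⟩)).trans (hsec _)

theorem stmt_11_general {X : Type*} (Y : Set X) :
    (∀ f : X → X, (∀ y ∈ Y, f y = y) →
        ∃ g : X → X, Function.Bijective g ∧ (∀ y ∈ Y, g y = y) ∧ f ∘ g ∘ f = f)
      ↔ (Yᶜ : Set X).Finite := by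
  refine ⟨fun hreg => ?_, fun hY f hf => ?_⟩
  · by_contra hY
    obtain ⟨f, hf, hsurj, hninj⟩ := Set.Infinite.exists_surjective_not_injective_fixing_compl hY
    obtain ⟨g, hg, -, hfgf⟩ := hreg f hf
    exact hninj (hsurj.injective_of_comp_comp_eq hg.surjective hfgf)
  · obtain ⟨σ, hσY, hσ⟩ := hY.exists_perm_fixing_comp_comp_eq hf
    exact ⟨σ, σ.bijective, hσY, hσ⟩

theorem stmt_11 {X : Type*} (Y : Set X) (hY : Y.Nonempty) :
    (∀ f : X → X, (∀ y ∈ Y, f y = y) →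
        ∃ g : X → X, Function.Bijective g ∧ (∀ y ∈ Y, g y = y) ∧ f ∘ g ∘ f = f)
      ↔ (Yᶜ : Set X).Finite :=
  stmt_11_general Y
end

section
/- Let f, g ∈ Ω̄(X,Y) = {h : X → X : h(Y) = Y}. Then f = h ∘ g for some h ∈ Ω̄(X,Y) (with h applied first, i.e., f(x) = g(h(x)) using right-action notation f = hg meaning x(hg) = (xh)g) if and only if (i) f(X) ⊆ g(X) and (ii) for every y ∈ Y, the cardinality of the fiber of y under f|_Y : Y → Y is at least the cardinality of the fiber of y under g|_Y. -/
/-!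
If `f = g ∘ h` with `h '' Y = Y`, then `h` maps the `f`-fiber of `y` in `Y` onto the `g`-fiber
of `y` in `Y`, which gives the cardinality inequality. Conversely, the inequality provides, for
each `y`, a surjection from the `f`-fiber onto the `g`-fiber; gluing these over all fibers gives
a surjection `φ : Y → Y` with `g ∘ φ = f` on `Y`, and outside `Y` we let `h` pick any
`g`-preimage of `f x`, which exists since `range f ⊆ range g`.
-/

universe u

open Function Cardinal Set

theorem Cardinal.exists_surjective_of_mk_le {α β : Type u} (h : #β ≤ #α)
    (hne : Nonempty α → Nonempty β) : ∃ f : α → β, Surjective f :=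
  exists_surjective_iff.2
    ⟨nonempty_fun.2 (or_iff_not_imp_left.2 fun hα => hne (not_isEmpty_iff.1 hα)), h⟩

theorem Cardinal.mk_sep_image_le {α β : Type u} {γ : Type*} (h : α → β) (g : β → γ)
    (Y : Set α) (y : γ) : #{w ∈ h '' Y | g w = y} ≤ #{w ∈ Y | g (h w) = y} := by
  have : {w ∈ h '' Y | g w = y} = h '' {w ∈ Y | g (h w) = y} :=
    (image_inter_preimage h Y {w | g w = y}).symm
  exact this ▸ mk_image_le

theorem exists_surjective_comp_eq_of_mk_fiber_le {α β : Type u} {γ : Type*} {p : α → γ}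
    {q : β → γ} (hpq : range p ⊆ range q)
    (hcard : ∀ c ∈ range q, #{b // q b = c} ≤ #{a // p a = c}) :
    ∃ φ : α → β, Surjective φ ∧ q ∘ φ = p := by
  have hfiber (c : γ) : ∃ σ : {a // p a = c} → {b // q b = c}, Surjective σ := by
    refine exists_surjective_of_mk_le ?_ fun ⟨⟨a, ha⟩⟩ => ?_
    · by_cases hc : c ∈ range q
      · exact hcard c hc
      · have : IsEmpty {b // q b = c} := ⟨fun ⟨b, hb⟩ => hc ⟨b, hb⟩⟩
        simp
    · obtain ⟨b, hb⟩ := hpq ⟨a, ha⟩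
      exact ⟨⟨b, hb⟩⟩
  choose σ hσ using hfiber
  refine ⟨Equiv.sigmaFiberEquiv q ∘ Sigma.map id σ ∘ (Equiv.sigmaFiberEquiv p).symm,
    (Equiv.sigmaFiberEquiv q).surjective.comp
      ((surjective_id.sigma_map hσ).comp (Equiv.sigmaFiberEquiv p).symm.surjective), ?_⟩
  funext a
  exact (σ (p a) ⟨a, rfl⟩).2

theorem stmt_12_general {X : Type*} (Y : Set X)
    (f g : X → X) (hf : f '' Y = Y) (hg : g '' Y = Y) :
    (∃ h : X → X, h '' Y = Y ∧ f = g ∘ h)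
      ↔ Set.range f ⊆ Set.range g ∧
        ∀ y ∈ Y, Cardinal.mk ↥{w ∈ Y | g w = y} ≤ Cardinal.mk ↥{w ∈ Y | f w = y} := by
  constructor
  · rintro ⟨h, hh, rfl⟩
    refine ⟨range_comp_subset_range h g, fun y _ => ?_⟩
    have := mk_sep_image_le h g Y y
    rwa [hh] at this
  · rintro ⟨hr, hcard⟩
    classical
    have hmk_fiber (k : X → X) (c : X) : #{a : Y // k a = c} = #{w ∈ Y | k w = c} :=
      mk_congr (Equiv.subtypeSubtypeEquivSubtypeInter (· ∈ Y) (k · = c))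
    obtain ⟨φ, hφ, hgφ⟩ := exists_surjective_comp_eq_of_mk_fiber_le
      (p := fun a : Y => f a) (q := fun a : Y => g a)
      (by rw [← image_eq_range, ← image_eq_range, hf, hg])
      (fun c hc => by
        rw [← image_eq_range, hg] at hc
        simpa only [hmk_fiber] using hcard c hc)
    choose z hz using fun x => hr (mem_range_self (f := f) x)
    refine ⟨fun x => if hx : x ∈ Y then φ ⟨x, hx⟩ else z x, ?_, ?_⟩
    · have hφY : (fun a : Y => if hx : (a : X) ∈ Y then (φ ⟨a, hx⟩ : X) else z a)
          = Subtype.val ∘ φ := by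
        funext a
        simp [a.2]
      rw [image_eq_range, hφY, range_comp, hφ.range_eq, image_univ, Subtype.range_coe]
    · funext x
      by_cases hx : x ∈ Y
      · simpa [hx] using (congrFun hgφ ⟨x, hx⟩).symm
      · simpa [hx] using (hz x).symm

theorem stmt_12 {X : Type*} (Y : Set X) (hY : Y.Nonempty)
    (f g : X → X) (hf : f '' Y = Y) (hg : g '' Y = Y) :
    (∃ h : X → X, h '' Y = Y ∧ f = g ∘ h)
      ↔ Set.range f ⊆ Set.range g ∧
        ∀ y ∈ Y, Cardinal.mk ↥{w ∈ Y | g w = y} ≤ Cardinal.mk ↥{w ∈ Y | f w = y} :=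
  stmt_12_general Y f g hf hg
end

section
/- Let f, g ∈ Ω̄(X,Y). Then f and g are L-related in Ω̄(X,Y) if and only if f(X) = g(X) and for every y ∈ Y, the fiber of y under f|_Y and the fiber of y under g|_Y have equal cardinality. -/
/-!
If `f = g ∘ h` with `h '' Y = Y`, then `h` maps the `f`-fiber of `y` in `Y` onto the `g`-fiber,
which gives `range f ⊆ range g` and one inequality between fiber cardinalities; symmetry gives
the rest. Conversely, equinumerous fibers let one glue fiberwise bijections into a permutation
`σ` of `Y` with `g ∘ σ = f`, and `h` is `σ` on `Y` and any choice of `g`-preimage of `f x` off `Y`.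
-/

open Cardinal Set

universe u

theorem Equiv.Perm.exists_comp_eq_of_mk_fiber_eq {ι β : Type*} (f g : ι → β)
    (hc : ∀ y, #{i // f i = y} = #{i // g i = y}) :
    ∃ σ : Equiv.Perm ι, ∀ i, g (σ i) = f i := by
  let e y := (Cardinal.eq.mp (hc y)).some
  refine ⟨(Equiv.sigmaFiberEquiv f).symm.trans
    ((Equiv.sigmaCongrRight e).trans (Equiv.sigmaFiberEquiv g)), fun i => ?_⟩
  exact (e (f i) ⟨i, rfl⟩).2

theorem Set.image_fiber_comp {α γ β : Type*} {Y : Set α} {Z : Set γ} {h : α → γ}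
    (hh : h '' Y = Z) (g : γ → β) (y : β) :
    h '' {w ∈ Y | g (h w) = y} = {z ∈ Z | g z = y} := by
  rw [← hh]
  exact image_inter_preimage h Y {z | g z = y}

theorem mk_fiber_le_mk_fiber_comp {α γ : Type u} {β : Type*} {Y : Set α} {Z : Set γ} {h : α → γ}
    (hh : h '' Y = Z) (g : γ → β) (y : β) :
    #{z ∈ Z | g z = y} ≤ #{w ∈ Y | g (h w) = y} :=
  image_fiber_comp hh g y ▸ mk_image_le

theorem Set.MapsTo.fiber_eq_empty {α β : Type*} {Y : Set α} {Z : Set β} {f : α → β}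
    (hf : MapsTo f Y Z) {y : β} (hy : y ∉ Z) : {w ∈ Y | f w = y} = ∅ :=
  eq_empty_of_forall_notMem fun _ ⟨hw, hfw⟩ => hy (hfw ▸ hf hw)

theorem exists_image_eq_comp_eq_of_mk_fiber_eq {α β : Type*} (Y : Set α) (f g : α → β)
    (hr : range f ⊆ range g) (hc : ∀ y, #{w ∈ Y | f w = y} = #{w ∈ Y | g w = y}) :
    ∃ h : α → α, h '' Y = Y ∧ f = g ∘ h := by
  classical
  have mk_fiber_eq (k : α → β) (y : β) : #{w : Y // k w = y} = #{w ∈ Y | k w = y} :=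
    mk_congr (Equiv.subtypeSubtypeEquivSubtypeInter (· ∈ Y) (k · = y))
  obtain ⟨σ, hσ⟩ := Equiv.Perm.exists_comp_eq_of_mk_fiber_eq (fun w : Y => f w) (fun w => g w)
    fun y => by rw [mk_fiber_eq, mk_fiber_eq, hc]
  choose k hk using fun x => hr (mem_range_self x)
  refine ⟨fun x => if hx : x ∈ Y then σ ⟨x, hx⟩ else k x, ?_, ?_⟩
  · ext x
    constructor
    · rintro ⟨w, hw, rfl⟩
      simp only [dif_pos hw, Subtype.coe_prop]
    · intro hx
      exact ⟨σ.symm ⟨x, hx⟩, (σ.symm _).2, by simp⟩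
  · funext x
    by_cases hx : x ∈ Y
    · simp only [Function.comp_apply, dif_pos hx, hσ]
    · simp only [Function.comp_apply, dif_neg hx, hk]

theorem stmt_13_general {X : Type*} (Y : Set X)
    (f g : X → X) (hf : f '' Y = Y) (hg : g '' Y = Y) :
    ((∃ h : X → X, h '' Y = Y ∧ f = g ∘ h) ∧ (∃ h' : X → X, h' '' Y = Y ∧ g = f ∘ h'))
      ↔ Set.range f = Set.range g ∧
        ∀ y ∈ Y, Cardinal.mk ↥{w ∈ Y | f w = y} = Cardinal.mk ↥{w ∈ Y | g w = y} := by
  constructor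
  · rintro ⟨⟨h, hh, hfg⟩, ⟨h', hh', hgf⟩⟩
    refine ⟨(hfg ▸ range_comp_subset_range h g).antisymm (hgf ▸ range_comp_subset_range h' f),
      fun y _ => ?_⟩
    exact le_antisymm (hgf ▸ mk_fiber_le_mk_fiber_comp hh' f y)
      (hfg ▸ mk_fiber_le_mk_fiber_comp hh g y)
  · rintro ⟨hr, hc⟩
    have hc_all (y : X) : #{w ∈ Y | f w = y} = #{w ∈ Y | g w = y} := by
      by_cases hy : y ∈ Y
      · exact hc y hy
      · rw [(mapsTo_iff_image_subset.mpr hf.le).fiber_eq_empty hy,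
          (mapsTo_iff_image_subset.mpr hg.le).fiber_eq_empty hy]
    exact ⟨exists_image_eq_comp_eq_of_mk_fiber_eq Y f g hr.le hc_all,
      exists_image_eq_comp_eq_of_mk_fiber_eq Y g f hr.ge fun y => (hc_all y).symm⟩

theorem stmt_13 {X : Type*} (Y : Set X) (hY : Y.Nonempty)
    (f g : X → X) (hf : f '' Y = Y) (hg : g '' Y = Y) :
    ((∃ h : X → X, h '' Y = Y ∧ f = g ∘ h) ∧ (∃ h' : X → X, h' '' Y = Y ∧ g = f ∘ h'))
      ↔ Set.range f = Set.range g ∧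
        ∀ y ∈ Y, Cardinal.mk ↥{w ∈ Y | f w = y} = Cardinal.mk ↥{w ∈ Y | g w = y} :=
  stmt_13_general Y f g hf hg
end

section
/- Let f, g ∈ Ω̄(X,Y). Then f and g are D-related in Ω̄(X,Y) if and only if |f(X) \ Y| = |g(X) \ Y| and there exists a bijection α : Y → Y such that for every y ∈ Y, the fiber of y under f|_Y and the fiber of α(y) under g|_Y have equal cardinality. -/
/-- Membership in Ω̄(X,Y). -/
def OmegaBar {X : Type*} (Y : Set X) (f : X → X) : Prop := f '' Y = Y

/-- Green's L-relation on the monoid Ω̄(X,Y) (composition left to right: f = hg means f = g ∘ h). -/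
def GreenL {X : Type*} (Y : Set X) (f g : X → X) : Prop :=
  (∃ h : X → X, OmegaBar Y h ∧ f = g ∘ h) ∧ (∃ h' : X → X, OmegaBar Y h' ∧ g = f ∘ h')

/-- Green's R-relation on the monoid Ω̄(X,Y). -/
def GreenR {X : Type*} (Y : Set X) (f g : X → X) : Prop :=
  (∃ h : X → X, OmegaBar Y h ∧ f = h ∘ g) ∧ (∃ h' : X → X, OmegaBar Y h' ∧ g = h' ∘ f)

/-- Green's D-relation: D = L ∘ R. -/
def GreenD {X : Type*} (Y : Set X) (f g : X → X) : Prop :=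
  ∃ k : X → X, OmegaBar Y k ∧ GreenL Y f k ∧ GreenR Y k g


/-! `f L k` holds exactly when `f` and `k` have the same range and, over every point, fibres
within `Y` of the same size; `k R g` holds exactly when `k = θ ∘ g` for some `θ ∈ Ω̄(X,Y)`
injective on `range g`. Such a `θ` maps `range g` bijectively onto `range k = range f`, permuting
`Y`, so it supplies both the bijection `range g \ Y ≃ range f \ Y` and the permutation `α` of `Y`
matching fibre sizes. Conversely, these data assemble into such a `θ`, and `k := θ ∘ g` witnesses
`f D g`. -/

open Set Cardinal Function

namespace Set

variable {α : Type*} {s t s' t' : Set α} {θ : α → α}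

lemma exists_bijOn_of_equiv (e : s ≃ t) : ∃ θ : α → α, BijOn θ s t ∧ ∀ x : s, θ x = e x := by
  classical
  refine ⟨fun x => if hx : x ∈ s then e ⟨x, hx⟩ else x, ⟨?_, ?_, ?_⟩, fun x => dif_pos x.2⟩
  · intro x hx
    simp only [dif_pos hx, Subtype.coe_prop]
  · intro x hx y hy hxy
    simp only [dif_pos hx, dif_pos hy] at hxy
    exact congrArg Subtype.val (e.injective (Subtype.ext hxy))
  · intro y hy
    exact ⟨e.symm ⟨y, hy⟩, (e.symm _).2, by simp⟩

lemma BijOn.exists_extend_of_mk_sdiff_eq (hθ : BijOn θ s t) (hs : s ⊆ s') (ht : t ⊆ t')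
    (hcard : #(s' \ s : Set α) = #(t' \ t : Set α)) :
    ∃ θ' : α → α, EqOn θ' θ s ∧ BijOn θ' s' t' := by
  classical
  obtain ⟨e⟩ := Cardinal.eq.1 hcard
  obtain ⟨θ₂, hθ₂, -⟩ := exists_bijOn_of_equiv e
  refine ⟨s.piecewise θ θ₂, piecewise_eqOn s θ θ₂, ?_⟩
  have hin : BijOn (s.piecewise θ θ₂) s t := hθ.congr (piecewise_eqOn s θ θ₂).symm
  have hout : BijOn (s.piecewise θ θ₂) (s' \ s) (t' \ t) :=
    hθ₂.congr ((piecewise_eqOn_compl s θ θ₂).mono fun _ hx => hx.2).symm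
  have hinj : InjOn (s.piecewise θ θ₂) (s ∪ (s' \ s)) :=
    (injOn_union disjoint_sdiff_right).2 ⟨hin.injOn, hout.injOn,
      fun x hx y hy hxy => (hout.mapsTo hy).2 (hxy ▸ hin.mapsTo hx)⟩
  simpa only [union_sdiff_cancel hs, union_sdiff_cancel ht] using hin.union hout hinj

lemma InjOn.sep_comp_eq {β : Type*} {g : β → α} (hθ : InjOn θ (range g)) {z : α}
    (hz : z ∈ range g) (u : Set β) :
    {w ∈ u | (θ ∘ g) w = θ z} = {w ∈ u | g w = z} := by
  ext w
  simp only [mem_ofPred_eq, comp_apply, hθ.eq_iff (mem_range_self w) hz]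

end Set

namespace OmegaBar

variable {X : Type*} {Y : Set X} {f g : X → X}

lemma subset_range (hf : OmegaBar Y f) : Y ⊆ range f :=
  hf ▸ image_subset_range f Y

lemma comp (hf : OmegaBar Y f) (hg : OmegaBar Y g) : OmegaBar Y (f ∘ g) := by
  rw [OmegaBar, image_comp, hg, hf]

lemma bijOn_of_injOn (hf : OmegaBar Y f) (hinj : InjOn f Y) : BijOn f Y Y := by
  have h := hinj.bijOn_image
  rwa [hf] at h

lemma sep_eq_empty (hf : OmegaBar Y f) {y : X} (hy : y ∉ Y) : {w ∈ Y | f w = y} = ∅ :=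
  eq_empty_of_forall_notMem fun _ ⟨hw, hfw⟩ => hy (hfw ▸ hf ▸ mem_image_of_mem f hw)

end OmegaBar

section Green

variable {X : Type*} {Y : Set X} {f g h k θ : X → X}

lemma mk_fiber_le_of_eq_comp (hh : OmegaBar Y h) (hfk : f = k ∘ h) (y : X) :
    #{w ∈ Y | k w = y} ≤ #{w ∈ Y | f w = y} := by
  calc #{w ∈ Y | k w = y} ≤ #(h '' {w ∈ Y | f w = y}) := mk_le_mk_of_subset ?_
    _ ≤ _ := mk_image_le
  rintro v ⟨hv, rfl⟩
  obtain ⟨w, hw, rfl⟩ := hh.symm ▸ hv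
  exact ⟨w, ⟨hw, by rw [hfk, comp_apply]⟩, rfl⟩

lemma exists_omegaBar_eq_comp_of_mk_fiber_eq (hr : range f ⊆ range k)
    (hfib : ∀ y, #{w ∈ Y | f w = y} = #{w ∈ Y | k w = y}) :
    ∃ h, OmegaBar Y h ∧ f = k ∘ h := by
  classical
  have e : ∀ y, {w : Y // f w = y} ≃ {w : Y // k w = y} := fun y =>
    Classical.choice <| Cardinal.eq.1 <| (mk_sep _ _).symm.trans <| (hfib y).trans <| mk_sep _ _
  set σ : Y ≃ Y := Equiv.ofFiberEquiv e
  have hσ : ∀ w : Y, k (σ w) = f w := Equiv.ofFiberEquiv_map e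
  choose pre hpre using fun x => hr (mem_range_self (f := f) x)
  refine ⟨fun x => if hx : x ∈ Y then σ ⟨x, hx⟩ else pre x, ?_, ?_⟩
  · refine Subset.antisymm ?_ fun y hy => ⟨σ.symm ⟨y, hy⟩, (σ.symm _).2, by simp⟩
    rintro _ ⟨x, hx, rfl⟩
    simp only [dif_pos hx, Subtype.coe_prop]
  · funext x
    by_cases hx : x ∈ Y
    · simp only [comp_apply, dif_pos hx, hσ]
    · simp only [comp_apply, dif_neg hx, hpre]

theorem greenL_iff :
    GreenL Y f k ↔ range f = range k ∧ ∀ y, #{w ∈ Y | f w = y} = #{w ∈ Y | k w = y} := by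
  constructor
  · rintro ⟨⟨h, hh, hfk⟩, ⟨h', hh', hkf⟩⟩
    refine ⟨?_, fun y => le_antisymm (mk_fiber_le_of_eq_comp hh' hkf y)
      (mk_fiber_le_of_eq_comp hh hfk y)⟩
    exact (hfk ▸ range_comp_subset_range h k).antisymm (hkf ▸ range_comp_subset_range h' f)
  · rintro ⟨hr, hfib⟩
    exact ⟨exists_omegaBar_eq_comp_of_mk_fiber_eq hr.le hfib,
      exists_omegaBar_eq_comp_of_mk_fiber_eq hr.ge fun y => (hfib y).symm⟩

lemma exists_omegaBar_eq_comp_of_factorsThrough (hk : OmegaBar Y k) (hg : OmegaBar Y g)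
    (hgk : g.FactorsThrough k) : ∃ ψ, OmegaBar Y ψ ∧ g = ψ ∘ k := by
  have hψ : g = extend k g id ∘ k := funext fun a => (hgk.extend_apply id a).symm
  refine ⟨extend k g id, ?_, hψ⟩
  calc extend k g id '' Y = extend k g id '' (k '' Y) := by rw [hk]
    _ = Y := by rw [← image_comp, ← hψ, hg]

theorem greenR_iff (hg : OmegaBar Y g) :
    GreenR Y k g ↔ ∃ θ, OmegaBar Y θ ∧ InjOn θ (range g) ∧ k = θ ∘ g := by
  constructor
  · rintro ⟨⟨θ, hθ, hkg⟩, ⟨ψ, -, hgk⟩⟩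
    refine ⟨θ, hθ, ?_, hkg⟩
    rintro _ ⟨a, rfl⟩ _ ⟨b, rfl⟩ hab
    rw [hgk, comp_apply, comp_apply, hkg, comp_apply, comp_apply, hab]
  · rintro ⟨θ, hθ, hinj, rfl⟩
    exact ⟨⟨θ, hθ, rfl⟩, exists_omegaBar_eq_comp_of_factorsThrough (hθ.comp hg) hg
      fun a b hab => hinj (mem_range_self a) (mem_range_self b) hab⟩

lemma mk_range_comp_sdiff_eq (hg : OmegaBar Y g) (hθ : OmegaBar Y θ) (hinj : InjOn θ (range g)) :
    #(range (θ ∘ g) \ Y : Set X) = #(range g \ Y : Set X) := by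
  have hdiff : range (θ ∘ g) \ Y = θ '' (range g \ Y) := by
    rw [range_comp, hinj.image_sdiff_subset hg.subset_range, hθ]
  rw [hdiff, mk_image_eq_of_injOn _ _ (hinj.mono sdiff_subset)]

end Green

theorem stmt_15_general {X : Type*} (Y : Set X)
    (f g : X → X) (hf : OmegaBar Y f) (hg : OmegaBar Y g) :
    GreenD Y f g
      ↔ Cardinal.mk ↥(Set.range f \ Y) = Cardinal.mk ↥(Set.range g \ Y) ∧
        ∃ α : Y ≃ Y, ∀ y : Y,
          Cardinal.mk ↥{w ∈ Y | f w = (y : X)}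
            = Cardinal.mk ↥{w ∈ Y | g w = ((α y : Y) : X)} := by
  constructor
  · rintro ⟨k, -, hfk, hkg⟩
    obtain ⟨hrange, hfib⟩ := greenL_iff.1 hfk
    obtain ⟨θ, hθ, hinj, rfl⟩ := (greenR_iff hg).1 hkg
    have hθY : BijOn θ Y Y := hθ.bijOn_of_injOn (hinj.mono hg.subset_range)
    refine ⟨hrange ▸ mk_range_comp_sdiff_eq hg hθ hinj, (hθY.equiv θ).symm, fun y => ?_⟩
    have hy : θ ((hθY.equiv θ).symm y) = y :=
      congrArg Subtype.val ((hθY.equiv θ).apply_symm_apply y)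
    rw [hfib, ← hy, hinj.sep_comp_eq (hg.subset_range ((hθY.equiv θ).symm y).2) Y]
  · rintro ⟨hcard, α, hα⟩
    obtain ⟨θ₁, hθ₁, hθ₁α⟩ := exists_bijOn_of_equiv α.symm
    obtain ⟨θ, hθθ₁, hθ⟩ :=
      hθ₁.exists_extend_of_mk_sdiff_eq hg.subset_range hf.subset_range hcard.symm
    have hθY : OmegaBar Y θ := by rw [OmegaBar, hθθ₁.image_eq, hθ₁.image_eq]
    have hθα : ∀ y : Y, θ (α y) = y := fun y => by
      rw [hθθ₁ (α y).2, hθ₁α, Equiv.symm_apply_apply]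
    refine ⟨θ ∘ g, hθY.comp hg, greenL_iff.2 ⟨by rw [range_comp, hθ.image_eq], fun y => ?_⟩,
      (greenR_iff hg).2 ⟨θ, hθY, hθ.injOn, rfl⟩⟩
    by_cases hy : y ∈ Y
    · lift y to Y using hy
      rw [hα y, ← hθα y, hθ.injOn.sep_comp_eq (hg.subset_range (α y).2) Y]
    · rw [hf.sep_eq_empty hy, (hθY.comp hg).sep_eq_empty hy]

theorem stmt_15 {X : Type*} (Y : Set X) (hY : Y.Nonempty)
    (f g : X → X) (hf : OmegaBar Y f) (hg : OmegaBar Y g) :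
    GreenD Y f g
      ↔ Cardinal.mk ↥(Set.range f \ Y) = Cardinal.mk ↥(Set.range g \ Y) ∧
        ∃ α : Y ≃ Y, ∀ y : Y,
          Cardinal.mk ↥{w ∈ Y | f w = (y : X)}
            = Cardinal.mk ↥{w ∈ Y | g w = ((α y : Y) : X)} :=
  stmt_15_general Y f g hf hg
end

section
/- Let f, g ∈ Ω̄(X,Y). Then f and g are J-related in Ω̄(X,Y) if and only if |f(X) \ Y| = |g(X) \ Y| and there exist partitions {P_y : y ∈ Y} and {Q_y : y ∈ Y} of Y (indexed by Y) such that for all y ∈ Y: |fiber of y under f|_Y| ≥ Σ_{w ∈ P_y} |fiber of w under g|_Y| and |fiber of y under g|_Y| ≥ Σ_{w ∈ Q_y} |fiber of w under f|_Y| (cardinal sums). -/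
/-- Green's J-relation on the monoid Ω̄(X,Y) (composition left to right: f = hgh' means f = h' ∘ g ∘ h). -/
def GreenJ {X : Type*} (Y : Set X) (f g : X → X) : Prop :=
  (∃ h h' : X → X, OmegaBar Y h ∧ OmegaBar Y h' ∧ f = h' ∘ g ∘ h) ∧
  (∃ k k' : X → X, OmegaBar Y k ∧ OmegaBar Y k' ∧ g = k' ∘ f ∘ k)

/-- A partition of Y indexed by Y: pairwise disjoint nonempty blocks whose union is Y. -/
def IsPartitionOf {X : Type*} (Y : Set X) (P : Y → Set X) : Prop :=
  (∀ y : Y, (P y).Nonempty) ∧ (∀ y : Y, P y ⊆ Y) ∧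
  (∀ y y' : Y, y ≠ y' → Disjoint (P y) (P y')) ∧ (⋃ y : Y, P y) = Y

open Set Function Cardinal

universe u

theorem OmegaBar.mapsTo {X : Type*} {Y : Set X} {f : X → X} (hf : OmegaBar Y f) : MapsTo f Y Y :=
  fun _ hx => hf.subset (mem_image_of_mem f hx)

theorem exists_surjective_comp_eq_of_mk_fiber_le_s16 {α β : Type u} {γ : Type*} {φ : α → γ}
    {ψ : β → γ} (hψ : Surjective ψ) (hfib : ∀ c, #(ψ ⁻¹' {c}) ≤ #(φ ⁻¹' {c})) :
    ∃ S : α → β, Surjective S ∧ ψ ∘ S = φ := by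
  have ht c : ∃ t : φ ⁻¹' {c} → ψ ⁻¹' {c}, Surjective t := by
    obtain ⟨b, hb⟩ := hψ c
    obtain ⟨e⟩ := (le_def _ _).mp (hfib c)
    exact exists_surjective_iff.mpr ⟨⟨fun _ => ⟨b, hb⟩⟩, ⟨e⟩⟩
  choose t ht using ht
  refine ⟨fun a => t (φ a) ⟨a, rfl⟩, fun b => ?_, funext fun a => (t (φ a) ⟨a, rfl⟩).2⟩
  generalize hc : ψ b = c
  obtain ⟨⟨a, rfl⟩, hab⟩ := ht c ⟨b, hc⟩
  exact ⟨a, congrArg Subtype.val hab⟩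

theorem mk_sep_mem_eq_sum {X Z : Type u} (Y : Set X) (S : Set Z) (g : X → Z) :
    #{v ∈ Y | g v ∈ S} = sum fun w : S => #{v ∈ Y | g v = w} := by
  have hU : {v ∈ Y | g v ∈ S} = ⋃ w : S, {v ∈ Y | g v = w} := by
    ext v; simp
  rw [hU, mk_iUnion_eq_sum_mk]
  intro w w' hne
  exact disjoint_left.mpr fun v hv hv' => hne (Subtype.ext (hv.2.symm.trans hv'.2))

theorem mk_sep_le_mk_sep_comp {X : Type u} {Z : Type*} {Y : Set X} {h : X → X} (hh : Y ⊆ h '' Y)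
    (F : X → Z) (c : Z) : #{v ∈ Y | F v = c} ≤ #{u ∈ Y | F (h u) = c} := by
  refine (mk_le_mk_of_subset ?_).trans (mk_image_le (f := h))
  rintro v ⟨hv, rfl⟩
  obtain ⟨u, hu, rfl⟩ := hh hv
  exact ⟨u, ⟨hu, rfl⟩, rfl⟩

theorem mk_restrict_preimage_singleton {X : Type u} {Y Y' : Set X} {f : X → X} (hf : MapsTo f Y Y')
    (y : Y') : #(hf.restrict f Y Y' ⁻¹' {y}) = #{v ∈ Y | f v = y} :=
  mk_congr
    { toFun := fun u => ⟨u.1, u.1.2, congrArg Subtype.val u.2⟩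
      invFun := fun v => ⟨⟨v, v.2.1⟩, Subtype.ext v.2.2⟩
      left_inv := fun _ => rfl
      right_inv := fun _ => rfl }

theorem exists_eqOn_and_subset_image_of_mk_le {X Z : Type u} {Y B : Set X} {A : Set Z} (π : X → Z)
    (hB : Disjoint B Y) (hAB : #A ≤ #B) : ∃ h, EqOn h π Y ∧ A ⊆ h '' B := by
  classical
  obtain ⟨σ⟩ := (le_def _ _).mp hAB
  refine ⟨Y.piecewise π (extend (fun a : A => (σ a : X)) Subtype.val π), piecewise_eqOn _ _ _,
    fun a ha => ⟨σ ⟨a, ha⟩, (σ _).2, ?_⟩⟩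
  rw [piecewise_eq_of_notMem _ _ _ (disjoint_left.mp hB (σ _).2)]
  exact (Subtype.val_injective.comp σ.injective).extend_apply _ _ ⟨a, ha⟩

theorem isPartitionOf_fibers {X : Type*} {Y : Set X} {h : X → X} (hh : OmegaBar Y h) :
    IsPartitionOf Y fun y => {w ∈ Y | h w = y} := by
  refine ⟨fun y => ?_, fun y => sep_subset _ _, fun y y' hne => ?_, ?_⟩
  · obtain ⟨w, hw, hwy⟩ : (y : X) ∈ h '' Y := hh.symm ▸ y.2
    exact ⟨w, hw, hwy⟩
  · exact disjoint_left.mpr fun w hw hw' => hne (Subtype.ext (hw.2.symm.trans hw'.2))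
  · refine (iUnion_subset fun y => sep_subset _ _).antisymm fun w hw => ?_
    exact mem_iUnion.mpr ⟨⟨h w, hh ▸ mem_image_of_mem h hw⟩, hw, rfl⟩

theorem IsPartitionOf.exists_fibers_eq {X : Type*} {Y : Set X} {P : Y → Set X}
    (hP : IsPartitionOf Y P) : ∃ π : X → X, π '' Y = Y ∧ ∀ y : Y, {w ∈ Y | π w = y} = P y := by
  classical
  obtain ⟨hne, hsub, hdisj, hunion⟩ := hP
  have hcover : ∀ w ∈ Y, ∃ y : Y, w ∈ P y := fun w hw => mem_iUnion.mp (hunion.ge hw)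
  have huniq : ∀ w (y y' : Y), w ∈ P y → w ∈ P y' → y = y' := fun w y y' hy hy' => by
    by_contra hne; exact (hdisj y y' hne).ne_of_mem hy hy' rfl
  set π : X → X := fun w => if hw : ∃ y : Y, w ∈ P y then hw.choose else w
  have hπ : ∀ (y : Y), ∀ w ∈ P y, π w = y := fun y w hw => by
    have hex : ∃ y : Y, w ∈ P y := ⟨y, hw⟩
    simp only [π, dif_pos hex]
    exact congrArg Subtype.val (huniq w _ y hex.choose_spec hw)
  have hfib : ∀ y : Y, {w ∈ Y | π w = y} = P y := fun y => by
    refine Subset.antisymm (fun w ⟨hw, hwy⟩ => ?_) fun w hw => ⟨hsub y hw, hπ y w hw⟩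
    obtain ⟨y', hy'⟩ := hcover w hw
    rwa [← Subtype.ext ((hπ y' w hy').symm.trans hwy)]
  refine ⟨π, Subset.antisymm ?_ fun y hy => ?_, hfib⟩
  · rintro _ ⟨w, hw, rfl⟩
    obtain ⟨y, hy⟩ := hcover w hw
    exact hπ y w hy ▸ y.2
  · obtain ⟨w, hw⟩ := hne ⟨y, hy⟩
    exact ⟨w, hsub _ hw, hπ _ w hw⟩

theorem exists_omegaBar_eq_comp {X : Type u} {Y : Set X} {f F : X → X} (hf : MapsTo f Y Y)
    (hF : OmegaBar Y F) (hrange : range f ⊆ range F)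
    (hfib : ∀ y : Y, #{v ∈ Y | F v = y} ≤ #{u ∈ Y | f u = y}) :
    ∃ h, OmegaBar Y h ∧ f = F ∘ h := by
  classical
  obtain ⟨S, hS, hSF⟩ := exists_surjective_comp_eq_of_mk_fiber_le_s16 (φ := hf.restrict f Y Y)
    (hF.mapsTo.restrict_surjective_iff.mpr hF.ge) fun y => by
      rw [mk_restrict_preimage_singleton, mk_restrict_preimage_singleton hf]
      exact hfib y
  set h : X → X := fun x => if hx : x ∈ Y then S ⟨x, hx⟩ else (hrange ⟨x, rfl⟩).choose
  refine ⟨h, Subset.antisymm ?_ fun y hy => ?_, funext fun x => ?_⟩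
  · rintro _ ⟨x, hx, rfl⟩
    simp only [h, dif_pos hx, Subtype.coe_prop]
  · obtain ⟨u, hu⟩ := hS ⟨y, hy⟩
    exact ⟨u, u.2, by simp only [h, dif_pos u.2, hu]⟩
  · by_cases hx : x ∈ Y
    · simp only [comp, h, dif_pos hx]
      exact congrArg Subtype.val (congrFun hSF ⟨x, hx⟩).symm
    · simp only [comp, h, dif_neg hx]
      exact (hrange ⟨x, rfl⟩).choose_spec.symm

theorem mk_range_comp_diff_le {X : Type u} {Y : Set X} {g h h' : X → X} (hh' : MapsTo h' Y Y) :
    #↥(range (h' ∘ g ∘ h) \ Y) ≤ #↥(range g \ Y) := by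
  refine (mk_le_mk_of_subset ?_).trans (mk_image_le (f := h'))
  rintro _ ⟨⟨x, rfl⟩, hx⟩
  exact ⟨g (h x), ⟨mem_range_self _, fun hY => hx (hh' hY)⟩, rfl⟩

theorem mk_sep_comp_eq_sum_mk_fiber {X : Type u} {Y : Set X} {g : X → X} (hg : MapsTo g Y Y)
    (h : X → X) (y : X) :
    #{v ∈ Y | h (g v) = y} = sum fun w : {w ∈ Y | h w = y} => #{v ∈ Y | g v = w} := by
  have hsep : {v ∈ Y | h (g v) = y} = {v ∈ Y | g v ∈ {w ∈ Y | h w = y}} := by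
    ext v
    exact and_congr_right fun hv => (and_iff_right (hg hv)).symm
  rw [hsep, mk_sep_mem_eq_sum]

theorem exists_partition_of_eq_comp {X : Type u} {Y : Set X} {g h h' : X → X} (hg : MapsTo g Y Y)
    (hh : Y ⊆ h '' Y) (hh' : OmegaBar Y h') :
    ∃ P : Y → Set X, IsPartitionOf Y P ∧ ∀ y : Y,
      sum (fun w : P y => #{v ∈ Y | g v = w}) ≤ #{v ∈ Y | (h' ∘ g ∘ h) v = y} :=
  ⟨_, isPartitionOf_fibers hh', fun y =>
    (mk_sep_comp_eq_sum_mk_fiber hg h' y).symm.trans_le (mk_sep_le_mk_sep_comp hh (h' ∘ g) y)⟩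

theorem exists_omegaBar_eq_comp_comp {X : Type u} {Y : Set X} {f g : X → X} (hf : MapsTo f Y Y)
    (hg : OmegaBar Y g) (hcard : #↥(range f \ Y) ≤ #↥(range g \ Y)) {P : Y → Set X}
    (hP : IsPartitionOf Y P)
    (hsum : ∀ y : Y, sum (fun w : P y => #{v ∈ Y | g v = w}) ≤ #{v ∈ Y | f v = y}) :
    ∃ h h', OmegaBar Y h ∧ OmegaBar Y h' ∧ f = h' ∘ g ∘ h := by
  obtain ⟨π, hπY, hπP⟩ := hP.exists_fibers_eq
  obtain ⟨h', hh'π, hsub⟩ := exists_eqOn_and_subset_image_of_mk_le π disjoint_sdiff_left hcard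
  have hh' : OmegaBar Y h' := hh'π.image_eq.trans hπY
  have hh'P (y : Y) : {w ∈ Y | h' w = y} = P y := by
    rw [← hπP y]
    ext w
    exact and_congr_right fun hw => by rw [hh'π hw]
  have hF : OmegaBar Y (h' ∘ g) := by rw [OmegaBar, image_comp, hg, hh']
  have hrange : range f ⊆ range (h' ∘ g) := by
    rintro _ ⟨x, rfl⟩
    by_cases hx : f x ∈ Y
    · exact image_subset_range _ _ (hF.symm ▸ hx)
    · obtain ⟨_, ⟨⟨v, rfl⟩, -⟩, hv⟩ := hsub ⟨mem_range_self x, hx⟩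
      exact ⟨v, hv⟩
  obtain ⟨h, hh, hfac⟩ := exists_omegaBar_eq_comp hf hF hrange fun y =>
    (mk_sep_comp_eq_sum_mk_fiber hg.mapsTo h' y).trans_le (hh'P y ▸ hsum y)
  exact ⟨h, h', hh, hh', hfac⟩

theorem exists_omegaBar_eq_comp_comp_iff {X : Type u} {Y : Set X} {f g : X → X}
    (hf : MapsTo f Y Y) (hg : OmegaBar Y g) :
    (∃ h h', OmegaBar Y h ∧ OmegaBar Y h' ∧ f = h' ∘ g ∘ h) ↔
      #↥(range f \ Y) ≤ #↥(range g \ Y) ∧ ∃ P : Y → Set X, IsPartitionOf Y P ∧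
        ∀ y : Y, sum (fun w : P y => #{v ∈ Y | g v = w}) ≤ #{v ∈ Y | f v = y} := by
  constructor
  · rintro ⟨h, h', hh, hh', rfl⟩
    exact ⟨mk_range_comp_diff_le hh'.mapsTo, exists_partition_of_eq_comp hg.mapsTo hh.ge hh'⟩
  · rintro ⟨hcard, P, hP, hsum⟩
    exact exists_omegaBar_eq_comp_comp hf hg hcard hP hsum

theorem stmt_16_general {X : Type*} (Y : Set X)
    (f g : X → X) (hf : OmegaBar Y f) (hg : OmegaBar Y g) :
    GreenJ Y f g
      ↔ Cardinal.mk ↥(Set.range f \ Y) = Cardinal.mk ↥(Set.range g \ Y) ∧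
        (∃ P : Y → Set X, IsPartitionOf Y P ∧ ∀ y : Y,
          Cardinal.sum (fun w : ↥(P y) => Cardinal.mk ↥{v ∈ Y | g v = (w : X)})
            ≤ Cardinal.mk ↥{v ∈ Y | f v = (y : X)}) ∧
        (∃ Q : Y → Set X, IsPartitionOf Y Q ∧ ∀ y : Y,
          Cardinal.sum (fun w : ↥(Q y) => Cardinal.mk ↥{v ∈ Y | f v = (w : X)})
            ≤ Cardinal.mk ↥{v ∈ Y | g v = (y : X)}) := by
  rw [GreenJ, exists_omegaBar_eq_comp_comp_iff hf.mapsTo hg,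
    exists_omegaBar_eq_comp_comp_iff hg.mapsTo hf, le_antisymm_iff]
  tauto

theorem stmt_16 {X : Type*} (Y : Set X) (hY : Y.Nonempty)
    (f g : X → X) (hf : OmegaBar Y f) (hg : OmegaBar Y g) :
    GreenJ Y f g
      ↔ Cardinal.mk ↥(Set.range f \ Y) = Cardinal.mk ↥(Set.range g \ Y) ∧
        (∃ P : Y → Set X, IsPartitionOf Y P ∧ ∀ y : Y,
          Cardinal.sum (fun w : ↥(P y) => Cardinal.mk ↥{v ∈ Y | g v = (w : X)})
            ≤ Cardinal.mk ↥{v ∈ Y | f v = (y : X)}) ∧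
        (∃ Q : Y → Set X, IsPartitionOf Y Q ∧ ∀ y : Y,
          Cardinal.sum (fun w : ↥(Q y) => Cardinal.mk ↥{v ∈ Y | f v = (w : X)})
            ≤ Cardinal.mk ↥{v ∈ Y | g v = (y : X)}) :=
  stmt_16_general Y f g hf hg
end

section
/- Let A be an infinite set and α, β surjective self-maps of A. Define N(α) = {a ∈ A : |α^{-1}(a)| < |A|} and n(α) = |N(α)|. Then n(α ∘ β) ≤ min(n(α), n(β)) (here the composite maps x to β(α(x)) in left-to-right notation αβ). -/
/-!
Precomposing with a surjection can only enlarge fibres, since `(β ∘ α)⁻¹ {a}` surjects onto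
`β⁻¹ {a}` via `α`; hence every small fibre of `β ∘ α` is a small fibre of `β`. Conversely
`α⁻¹ {b} ⊆ (β ∘ α)⁻¹ {β b}`, so `β` maps `N(α)` onto a superset of `N(β ∘ α)`.
-/

/-- n(α) = cardinality of {a : |α⁻¹(a)| < |A|}. -/
noncomputable def nSmallFibers {A : Type*} (α : A → A) : Cardinal :=
  Cardinal.mk ↥{a : A | Cardinal.mk ↥(α ⁻¹' {a}) < Cardinal.mk A}

open Cardinal Function Set

universe u

theorem Cardinal.mk_preimage_le_mk_preimage_comp {A B C : Type u} {α : A → B}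
    (hα : Surjective α) (β : B → C) (s : Set C) : #(β ⁻¹' s) ≤ #((β ∘ α) ⁻¹' s) :=
  mk_preimage_of_subset_range α (β ⁻¹' s) (hα.range_eq ▸ subset_univ _)

section SmallFibers

variable {A : Type u}

def smallFibers (α : A → A) : Set A := {a | #(α ⁻¹' {a}) < #A}

theorem smallFibers_comp_subset_right {α : A → A} (hα : Surjective α) (β : A → A) :
    smallFibers (β ∘ α) ⊆ smallFibers β :=
  fun _ ha ↦ (mk_preimage_le_mk_preimage_comp hα β _).trans_lt ha

theorem preimage_smallFibers_comp_subset (α β : A → A) :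
    β ⁻¹' smallFibers (β ∘ α) ⊆ smallFibers α := fun b hb ↦
  (mk_le_mk_of_subset (fun x (hx : α x = b) ↦ by simp [hx])).trans_lt hb

theorem nSmallFibers_comp_le_left {β : A → A} (hβ : Surjective β) (α : A → A) :
    nSmallFibers (β ∘ α) ≤ nSmallFibers α :=
  (mk_preimage_of_subset_range β _ (hβ.range_eq ▸ subset_univ _)).trans
    (mk_le_mk_of_subset (preimage_smallFibers_comp_subset α β))

theorem nSmallFibers_comp_le_right {α : A → A} (hα : Surjective α) (β : A → A) :
    nSmallFibers (β ∘ α) ≤ nSmallFibers β :=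
  mk_le_mk_of_subset (smallFibers_comp_subset_right hα β)

end SmallFibers

theorem stmt_18_general {A : Type*} (α β : A → A)
    (hα : Function.Surjective α) (hβ : Function.Surjective β) :
    nSmallFibers (β ∘ α) ≤ min (nSmallFibers α) (nSmallFibers β) :=
  le_min (nSmallFibers_comp_le_left hβ α) (nSmallFibers_comp_le_right hα β)

theorem stmt_18 {A : Type*} [Infinite A] (α β : A → A)
    (hα : Function.Surjective α) (hβ : Function.Surjective β) :
    nSmallFibers (β ∘ α) ≤ min (nSmallFibers α) (nSmallFibers β) :=
  stmt_18_general α β hα hβ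
end

section
/- Let Y be an infinite nonempty subset of X. Then the kernel (unique minimal two-sided ideal) of the semigroup Ω̄(X,Y) = {f : X → X : f(Y) = Y} exists and equals J(0,0) = {f ∈ Ω̄(X,Y) : f(X) ⊆ Y and every fiber of f|_Y : Y → Y has cardinality |Y|}. -/
/-- An ideal of the semigroup Ω̄(X,Y): a nonempty subset of Ω̄(X,Y) closed under
multiplication (on either side) by elements of Ω̄(X,Y). -/
def IsIdeal {X : Type*} (Y : Set X) (I : Set (X → X)) : Prop :=
  I.Nonempty ∧ (∀ f ∈ I, OmegaBar Y f) ∧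
  ∀ f ∈ I, ∀ s : X → X, OmegaBar Y s → (s ∘ f ∈ I ∧ f ∘ s ∈ I)

universe u

open Cardinal Function Set

theorem exists_mk_fiber_eq_self (α : Type*) [Infinite α] :
    ∃ p : α → α, ∀ a, #{x // p x = a} = #α := by
  obtain ⟨e⟩ : Nonempty (α ≃ α × α) := by
    rw [← Cardinal.eq, mk_prod, lift_id, mul_eq_self (infinite_iff.1 ‹_›)]
  refine ⟨Prod.snd ∘ e, fun a => le_antisymm (mk_subtype_le _) ?_⟩
  exact mk_le_of_injective (f := fun b => ⟨e.symm (b, a), by simp⟩)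
    fun b c h => by simpa using congrArg Subtype.val h

theorem exists_injective_comp_eq_of_mk_fiber_le {α β : Type u} {γ : Type*}
    {g : α → γ} {f : β → γ} (h : ∀ c ∈ range g, #{x // g x = c} ≤ #{y // f y = c}) :
    ∃ w : α → β, Injective w ∧ f ∘ w = g := by
  have h' : ∀ c, #{x // g x = c} ≤ #{y // f y = c} := by
    intro c
    by_cases hc : c ∈ range g
    · exact h c hc
    · have : IsEmpty {x // g x = c} := ⟨fun x => hc ⟨x, x.2⟩⟩
      simp
  let ι c : {x // g x = c} ↪ {y // f y = c} := ((le_def _ _).1 (h' c)).some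
  let w := ((Equiv.sigmaFiberEquiv g).symm.toEmbedding.trans
    (Embedding.sigmaMap (Embedding.refl γ) ι)).trans (Equiv.sigmaFiberEquiv f).toEmbedding
  exact ⟨w, w.injective, funext fun x => (ι (g x) ⟨x, rfl⟩).2⟩

section

variable {X : Type*} {Y : Set X}

theorem mk_restrict_fiber (f : X → X) (c : X) :
    #{x : Y // f x = c} = #{w ∈ Y | f w = c} :=
  mk_congr (Equiv.subtypeSubtypeEquivSubtypeInter (· ∈ Y) (f · = c))

theorem OmegaBar.mapsTo_s19 {s : X → X} (hs : OmegaBar Y s) : MapsTo s Y Y :=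
  fun _ hx => hs ▸ mem_image_of_mem s hx

theorem OmegaBar.surjOn {s : X → X} (hs : OmegaBar Y s) : SurjOn s Y Y :=
  hs.symm.subset

variable (Y) in
def J00 : Set (X → X) :=
  {f | OmegaBar Y f ∧ range f ⊆ Y ∧ ∀ y ∈ Y, #{w ∈ Y | f w = y} = #Y}

theorem omegaBar_of_mk_fiber_eq {f : X → X} (hrange : range f ⊆ Y)
    (hfib : ∀ y ∈ Y, #{w ∈ Y | f w = y} = #Y) : OmegaBar Y f := by
  refine (image_subset_range f Y |>.trans hrange).antisymm fun y hy => ?_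
  have : #{w ∈ Y | f w = y} ≠ 0 := hfib y hy ▸ mk_ne_zero_iff.2 ⟨⟨y, hy⟩⟩
  obtain ⟨⟨w, hw, rfl⟩⟩ := mk_ne_zero_iff.1 this
  exact mem_image_of_mem f hw

theorem J00_nonempty (hinf : Y.Infinite) : (J00 Y).Nonempty := by
  classical
  have : Infinite Y := hinf.to_subtype
  obtain ⟨y₀, hy₀⟩ := hinf.nonempty
  obtain ⟨p, hp⟩ := exists_mk_fiber_eq_self Y
  let f : X → X := fun x => if hx : x ∈ Y then p ⟨x, hx⟩ else y₀
  have hrange : range f ⊆ Y := by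
    rintro _ ⟨x, rfl⟩
    by_cases hx : x ∈ Y <;> simp [f, hx, hy₀]
  have hfib : ∀ y ∈ Y, #{w ∈ Y | f w = y} = #Y := fun y hy => by
    rw [← mk_restrict_fiber, ← hp ⟨y, hy⟩]
    exact mk_congr (Equiv.subtypeEquivRight fun x => by simp [f, Subtype.ext_iff])
  exact ⟨f, omegaBar_of_mk_fiber_eq hrange hfib, hrange, hfib⟩

theorem J00.omegaBar_comp_mem {s f : X → X} (hs : OmegaBar Y s) (hf : f ∈ J00 Y) :
    s ∘ f ∈ J00 Y := by
  obtain ⟨hfΩ, hrange, hfib⟩ := hf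
  refine ⟨by rw [OmegaBar, image_comp, hfΩ, hs], ?_, fun y hy => ?_⟩
  · rw [range_comp]
    exact (image_mono hrange).trans hs.subset
  obtain ⟨z, hz, rfl⟩ := hs.surjOn hy
  refine (mk_le_mk_of_subset (sep_subset _ _)).antisymm ?_
  exact hfib z hz ▸ mk_le_mk_of_subset fun w ⟨hw, hfw⟩ => ⟨hw, by simp [hfw]⟩

theorem J00.comp_omegaBar_mem {s f : X → X} (hf : f ∈ J00 Y) (hs : OmegaBar Y s) :
    f ∘ s ∈ J00 Y := by
  obtain ⟨hfΩ, hrange, hfib⟩ := hf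
  refine ⟨by rw [OmegaBar, image_comp, hs, hfΩ], (range_comp_subset_range s f).trans hrange,
    fun y hy => (mk_le_mk_of_subset (sep_subset _ _)).antisymm ?_⟩
  calc #Y = #{w ∈ Y | f w = y} := (hfib y hy).symm
    _ ≤ #(s '' {w ∈ Y | (f ∘ s) w = y}) := mk_le_mk_of_subset fun v ⟨hv, hfv⟩ => by
        obtain ⟨w, hw, rfl⟩ := hs.surjOn hv
        exact ⟨w, ⟨hw, hfv⟩, rfl⟩
    _ ≤ #{w ∈ Y | (f ∘ s) w = y} := mk_image_le

theorem isIdeal_J00 (hinf : Y.Infinite) : IsIdeal Y (J00 Y) :=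
  ⟨J00_nonempty hinf, fun _ hf => hf.1,
    fun _ hf _ hs => ⟨J00.omegaBar_comp_mem hs hf, J00.comp_omegaBar_mem hf hs⟩⟩

theorem exists_omegaBar_comp_eq {g f : X → X} (hg : OmegaBar Y g) (hf : f ∈ J00 Y) :
    ∃ b, OmegaBar Y b ∧ g ∘ b = f := by
  obtain ⟨-, hrange, hfib⟩ := hf
  obtain ⟨w, hw, hfw⟩ := exists_injective_comp_eq_of_mk_fiber_le (g := fun z : Y => g z)
    (f := fun z : Y => f z) <| by
      rintro _ ⟨z, rfl⟩
      rw [mk_restrict_fiber, mk_restrict_fiber, hfib _ (hg.mapsTo_s19 z.2)]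
      exact mk_le_mk_of_subset (sep_subset _ _)
  choose t ht using fun u (hu : u ∈ Y) => hg.surjOn hu
  -- `b` undoes `w` on its range (making `b` onto `Y`) and lifts `f` through `g` elsewhere.
  let b : X → X := extend (Subtype.val ∘ w) Subtype.val fun x => t (f x) (hrange ⟨x, rfl⟩)
  have hb : ∀ x, b x ∈ Y ∧ g (b x) = f x := fun x => by
    by_cases hx : ∃ z, (w z : X) = x
    · obtain ⟨z, rfl⟩ := hx
      rw [show b (w z) = z from (Subtype.val_injective.comp hw).extend_apply _ _ z]
      exact ⟨z.2, (congrFun hfw z).symm⟩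
    · rw [show b x = _ from extend_apply' _ _ _ hx]
      exact ht _ _
  refine ⟨b, (image_subset_iff.2 fun x _ => (hb x).1).antisymm fun y hy => ?_,
    funext fun x => (hb x).2⟩
  exact ⟨w ⟨y, hy⟩, (w ⟨y, hy⟩).2, (Subtype.val_injective.comp hw).extend_apply _ _ ⟨y, hy⟩⟩

theorem J00_subset_of_isIdeal {I : Set (X → X)} (hI : IsIdeal Y I) : J00 Y ⊆ I := by
  obtain ⟨⟨g, hgI⟩, hIΩ, hImul⟩ := hI
  intro f hf
  obtain ⟨b, hb, rfl⟩ := exists_omegaBar_comp_eq (hIΩ g hgI) hf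
  exact (hImul g hgI b hb).2

end

theorem stmt_19_general {X : Type*} (Y : Set X) (hinf : Y.Infinite) :
    IsIdeal Y {f : X → X | OmegaBar Y f ∧ Set.range f ⊆ Y ∧
        ∀ y ∈ Y, Cardinal.mk ↥{w ∈ Y | f w = y} = Cardinal.mk ↥Y} ∧
    ∀ I : Set (X → X), IsIdeal Y I →
      {f : X → X | OmegaBar Y f ∧ Set.range f ⊆ Y ∧
        ∀ y ∈ Y, Cardinal.mk ↥{w ∈ Y | f w = y} = Cardinal.mk ↥Y} ⊆ I :=
  ⟨isIdeal_J00 hinf, fun _ => J00_subset_of_isIdeal⟩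

theorem stmt_19 {X : Type*} (Y : Set X) (hY : Y.Nonempty) (hinf : Y.Infinite) :
    IsIdeal Y {f : X → X | OmegaBar Y f ∧ Set.range f ⊆ Y ∧
        ∀ y ∈ Y, Cardinal.mk ↥{w ∈ Y | f w = y} = Cardinal.mk ↥Y} ∧
    ∀ I : Set (X → X), IsIdeal Y I →
      {f : X → X | OmegaBar Y f ∧ Set.range f ⊆ Y ∧
        ∀ y ∈ Y, Cardinal.mk ↥{w ∈ Y | f w = y} = Cardinal.mk ↥Y} ⊆ I :=
  stmt_19_general Y hinf
end
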